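/- Let μ > 0, η > 0 and let the sequence (A_k) satisfy A_0 ≥ 0 and A_{k+1} = A_k + (η + 2A_kμη + √(η² + 4ηA_k(1+ημ)(1+A_kμ)))/2. Then for every k, A_{k+1} ≥ A_k / (1 - √(ημ/(1+ημ))); consequently if A_1 ≥ η, then A_k ≥ η (1 - √(ημ/(1+ημ)))^{-(k-1)} for all k ≥ 1. -/

import Mathlib

/-!
Writing `x = ημ`, the square root in the recurrence dominates `2 A_k √(x(1+x))`, so that
`A_{k+1} ≥ A_k (1 + x + √(x(1+x)))`. Since `√(x(1+x)) = (1+x) √(x/(1+x))`, this factor equals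
`(1+x)(1+t)` with `t = √(x/(1+x))` and `(1+x)(1 - t²) = 1`, i.e. it is `1/(1-t)`.
Iterating the one-step bound from `A_1 ≥ η` gives the geometric lower bound.
-/

open Real

noncomputable def nextCoeff (μ η a : ℝ) : ℝ :=
  a + (η + 2 * a * μ * η + √(η ^ 2 + 4 * η * a * (1 + η * μ) * (1 + a * μ))) / 2

section GrowthFactor

variable {x : ℝ}

lemma sqrt_div_one_add_lt_one (hx : 0 ≤ x) : √(x / (1 + x)) < 1 := by
  rw [sqrt_lt' one_pos, one_pow, div_lt_one (by positivity)]
  linarith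

lemma sqrt_mul_one_add_eq (hx : 0 ≤ x) : √(x * (1 + x)) = (1 + x) * √(x / (1 + x)) := by
  have h1x : 0 < 1 + x := by positivity
  rw [show x * (1 + x) = (1 + x) ^ 2 * (x / (1 + x)) by field_simp, sqrt_mul (by positivity),
    sqrt_sq h1x.le]

lemma one_add_add_sqrt_mul_eq_inv (hx : 0 ≤ x) :
    1 + x + √(x * (1 + x)) = (1 - √(x / (1 + x)))⁻¹ := by
  have ht : √(x / (1 + x)) ^ 2 = x / (1 + x) := sq_sqrt (by positivity)
  refine eq_inv_of_mul_eq_one_left ?_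
  rw [sqrt_mul_one_add_eq hx]
  calc (1 + x + (1 + x) * √(x / (1 + x))) * (1 - √(x / (1 + x)))
      = (1 + x) * (1 - √(x / (1 + x)) ^ 2) := by ring
    _ = 1 := by rw [ht]; field_simp; ring

end GrowthFactor

section NextCoeff

variable {μ η a : ℝ}

lemma mul_growth_le_nextCoeff (hμ : 0 ≤ μ) (hη : 0 ≤ η) (ha : 0 ≤ a) :
    a * (1 + η * μ + √(η * μ * (1 + η * μ))) ≤ nextCoeff μ η a := by
  have hroot : 2 * a * √(η * μ * (1 + η * μ)) ≤
      √(η ^ 2 + 4 * η * a * (1 + η * μ) * (1 + a * μ)) := by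
    apply le_sqrt_of_sq_le
    rw [mul_pow, sq_sqrt (by positivity)]
    nlinarith [mul_nonneg (mul_nonneg hη ha) (by positivity : (0 : ℝ) ≤ 1 + η * μ)]
  unfold nextCoeff
  nlinarith [mul_nonneg (mul_nonneg ha hμ) hη]

lemma div_one_sub_sqrt_le_nextCoeff (hμ : 0 ≤ μ) (hη : 0 ≤ η) (ha : 0 ≤ a) :
    a / (1 - √(η * μ / (1 + η * μ))) ≤ nextCoeff μ η a := by
  rw [div_eq_mul_inv, ← one_add_add_sqrt_mul_eq_inv (by positivity)]
  exact mul_growth_le_nextCoeff hμ hη ha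

end NextCoeff

theorem coefficients_exponential_growth (μ η : ℝ) (hμ : 0 < μ) (hη : 0 < η)
    (A : ℕ → ℝ) (hA0 : 0 ≤ A 0)
    (hrec : ∀ k, A (k + 1) = A k + (η + 2 * A k * μ * η +
      Real.sqrt (η ^ 2 + 4 * η * A k * (1 + η * μ) * (1 + A k * μ))) / 2) :
    (∀ k, A (k + 1) ≥ A k / (1 - Real.sqrt (η * μ / (1 + η * μ)))) ∧
    (A 1 ≥ η → ∀ k, 1 ≤ k →
      A k ≥ η / (1 - Real.sqrt (η * μ / (1 + η * μ))) ^ (k - 1)) := by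
  set q := 1 - √(η * μ / (1 + η * μ))
  have hq : 0 < q := sub_pos.mpr (sqrt_div_one_add_lt_one (by positivity))
  have hstep : ∀ k, 0 ≤ A k → A k / q ≤ A (k + 1) := fun k hk =>
    (hrec k).symm ▸ div_one_sub_sqrt_le_nextCoeff hμ.le hη.le hk
  have hnonneg : ∀ k, 0 ≤ A k := by
    intro k
    induction k with
    | zero => exact hA0
    | succ k ih => exact (div_nonneg ih hq.le).trans (hstep k ih)
  refine ⟨fun k => hstep k (hnonneg k), fun hA1 k hk => ?_⟩
  obtain ⟨n, rfl⟩ := Nat.exists_eq_add_of_le' hk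
  have hgeom : q⁻¹ ^ n * A 1 ≤ A (n + 1) :=
    geom_le (u := fun j => A (j + 1)) (inv_nonneg.mpr hq.le) n fun j _ => by
      simpa [div_eq_inv_mul] using hstep (j + 1) (hnonneg _)
  calc η / q ^ (n + 1 - 1) = q⁻¹ ^ n * η := by simp [div_eq_inv_mul, inv_pow]
    _ ≤ q⁻¹ ^ n * A 1 := by gcongr
    _ ≤ A (n + 1) := hgeom
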